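/- arXiv:0711.0111 — 2 statements merged into one kernel-verified Lean document; each statement's English description precedes it below -/
import Mathlib

section
/- Let φ be a CP-semigroup on a von Neumann algebra M ⊆ B(H). Then φ is continuous in the point-strong operator topology: for every A ∈ M, every ξ ∈ H and every t₀ ≥ 0, lim_{t→t₀} ‖φ_t(A)ξ − φ_{t₀}(A)ξ‖ = 0 (two-sided limit, with t ranging over [0,∞)). -/
open scoped InnerProductSpace ComplexOrder
open Filter Topology MeasureTheory

/-- A functional `ω` on `B(H)` is *σ-weakly continuous on `M`* if on `M` it agrees with a
functional of the form `X ↦ ∑ₙ ⟪ξₙ, X ηₙ⟫` with `∑ ‖ξₙ‖² < ∞` and `∑ ‖ηₙ‖² < ∞`. -/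
def NormalFunctionalOn {H : Type*} [NormedAddCommGroup H] [InnerProductSpace ℂ H]
    [CompleteSpace H] (M : Set (H →L[ℂ] H)) (ω : (H →L[ℂ] H) → ℂ) : Prop :=
  ∃ ξ η : ℕ → H, (Summable fun n => ‖ξ n‖ ^ 2) ∧ (Summable fun n => ‖η n‖ ^ 2) ∧
    ∀ X ∈ M, ω X = ∑' n, ⟪ξ n, X (η n)⟫_ℂ

/-- A sequence of operators converges in the σ-strong* topology. -/
def SigmaStrongStarTendsto {H : Type*} [NormedAddCommGroup H] [InnerProductSpace ℂ H]
    [CompleteSpace H] (A : ℕ → H →L[ℂ] H) (L : H →L[ℂ] H) : Prop :=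
  ∀ ξ : ℕ → H, (Summable fun k => ‖ξ k‖ ^ 2) →
    Filter.Tendsto
      (fun n => (∑' k, ‖A n (ξ k) - L (ξ k)‖ ^ 2) +
        ∑' k, ‖star (A n) (ξ k) - star L (ξ k)‖ ^ 2)
      Filter.atTop (nhds 0)

/-- A sequence of operators converges in the σ-weak topology. -/
def SigmaWeakTendsto {H : Type*} [NormedAddCommGroup H] [InnerProductSpace ℂ H]
    [CompleteSpace H] (A : ℕ → H →L[ℂ] H) (L : H →L[ℂ] H) : Prop :=
  ∀ ξ η : ℕ → H, (Summable fun k => ‖ξ k‖ ^ 2) → (Summable fun k => ‖η k‖ ^ 2) →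
    Filter.Tendsto (fun n => ∑' k, ⟪ξ k, A n (η k)⟫_ℂ)
      Filter.atTop (nhds (∑' k, ⟪ξ k, L (η k)⟫_ℂ))

/-- A CP-semigroup on a von Neumann algebra `M ⊆ B(H)`: a semigroup `{φ_t}_{t ≥ 0}` of
contractive, normal, completely positive linear maps of `M` into itself, with `φ₀ = id`,
which is continuous in the point-weak operator topology. -/
structure CPSemigroup {H : Type*} [NormedAddCommGroup H] [InnerProductSpace ℂ H]
    [CompleteSpace H] (M : VonNeumannAlgebra H) where
  φ : ℝ → (H →L[ℂ] H) →ₗ[ℂ] (H →L[ℂ] H)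
  mapsTo : ∀ t : ℝ, 0 ≤ t → ∀ A ∈ M, φ t A ∈ M
  contractive : ∀ t : ℝ, 0 ≤ t → ∀ A ∈ M, ‖φ t A‖ ≤ ‖A‖
  normal : ∀ t : ℝ, 0 ≤ t → ∀ ω : (H →L[ℂ] H) → ℂ,
    NormalFunctionalOn (M : Set (H →L[ℂ] H)) ω →
    NormalFunctionalOn (M : Set (H →L[ℂ] H)) fun A => ω (φ t A)
  completelyPositive : ∀ t : ℝ, 0 ≤ t → ∀ n : ℕ, ∀ A : Fin n → (H →L[ℂ] H),
    (∀ i, A i ∈ M) → ∀ ξ : Fin n → H,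
    0 ≤ ∑ i, ∑ j, ⟪ξ i, φ t (star (A i) * A j) (ξ j)⟫_ℂ
  map_id : ∀ A ∈ M, φ 0 A = A
  semigroup : ∀ s t : ℝ, 0 ≤ s → 0 ≤ t → ∀ A ∈ M, φ (s + t) A = φ s (φ t A)
  pointWeakContinuous : ∀ A ∈ M, ∀ ξ η : H, ∀ t₀ : ℝ, 0 ≤ t₀ →
    Filter.Tendsto (fun t => ⟪η, φ t A ξ⟫_ℂ) (nhdsWithin t₀ (Set.Ici 0))
      (nhds ⟪η, φ t₀ A ξ⟫_ℂ)

/-- Membership in the domain `D(δ)` of the generator of a CP-semigroup. -/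
def CPSemigroup.InDomain {H : Type*} [NormedAddCommGroup H] [InnerProductSpace ℂ H]
    [CompleteSpace H] {M : VonNeumannAlgebra H} (S : CPSemigroup M)
    (A : H →L[ℂ] H) : Prop :=
  A ∈ M ∧ ∃ D ∈ M, ∀ ω : (H →L[ℂ] H) → ℂ,
    NormalFunctionalOn (M : Set (H →L[ℂ] H)) ω →
    Filter.Tendsto (fun t : ℝ => (t : ℂ)⁻¹ * (ω (S.φ t A) - ω A))
      (nhdsWithin 0 (Set.Ioi 0)) (nhds (ω D))

/-!
Complete positivity gives the Kadison–Schwarz inequality `‖φ_t(X)ξ‖² ≤ ⟪ξ, φ_t(X⋆X)ξ⟫`, which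
together with point-weak continuity makes `t ↦ φ_t(X)ξ` strongly continuous at `t = 0`.

For `t₀ ≥ 0` write the normal functional `⟪ξ, φ_{t₀}(·)ξ⟫` as `∑ₖ ⟪ζₖ, · ηₖ⟫` and split
`A = Y + Z` with `Y = δ⁻¹ ∫₀^δ φ_c(A) dc`. By the semigroup law and normality,
`φ_t(Y) = δ⁻¹ ∫_t^{t+δ} φ_c(A) dc`, so `t ↦ φ_t(Y)ξ` is Lipschitz. By Kadison–Schwarz and
point-weak continuity, `‖φ_t(Z)ξ‖²` is eventually below any bound exceeding
`⟪ξ, φ_{t₀}(Z⋆Z)ξ⟫ ≤ ∑ₖ ‖Zζₖ‖ ‖Zηₖ‖`, and this sum tends to `0` as `δ → 0` by strong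
continuity at `0` and dominated convergence. Hence `t ↦ φ_t(A)ξ` is a locally uniform limit of
continuous functions at `t₀`.
-/

open Set intervalIntegral ContinuousLinearMap RCLike
open scoped Interval ComplexConjugate

section InnerProductSpace

variable {𝕜 E : Type*} [RCLike 𝕜] [NormedAddCommGroup E] [InnerProductSpace 𝕜 E]

lemma norm_le_of_forall_norm_inner_le {x : E} {C : ℝ} (hC : 0 ≤ C)
    (h : ∀ w : E, ‖⟪w, x⟫_𝕜‖ ≤ C * ‖w‖) : ‖x‖ ≤ C := by
  rcases (norm_nonneg x).eq_or_lt with hx | hx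
  · rwa [← hx]
  · have hxx := h x
    rw [inner_self_eq_norm_sq_to_K, norm_pow, norm_ofReal, abs_norm, sq] at hxx
    exact le_of_mul_le_mul_right hxx hx

lemma tendsto_of_tendsto_inner_of_norm_sq_le {α : Type*} {l : Filter α} {f : α → E} {x : E}
    {g : α → ℝ} (hweak : Tendsto (fun a => ⟪x, f a⟫_𝕜) l (𝓝 ⟪x, x⟫_𝕜))
    (hle : ∀ᶠ a in l, ‖f a‖ ^ 2 ≤ g a) (hg : Tendsto g l (𝓝 (‖x‖ ^ 2))) :
    Tendsto f l (𝓝 x) := by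
  have hre : Tendsto (fun a => re ⟪x, f a⟫_𝕜) l (𝓝 (‖x‖ ^ 2)) := by
    simpa only [Function.comp_def, inner_self_eq_norm_sq] using
      (continuous_re.tendsto _).comp hweak
  have hbound : Tendsto (fun a => g a - 2 * re ⟪x, f a⟫_𝕜 + ‖x‖ ^ 2) l (𝓝 0) := by
    convert (hg.sub (hre.const_mul 2)).add_const (‖x‖ ^ 2) using 2
    ring
  have hsq : Tendsto (fun a => ‖f a - x‖ ^ 2) l (𝓝 0) := by
    refine squeeze_zero' (Eventually.of_forall fun a => sq_nonneg _) ?_ hbound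
    filter_upwards [hle] with a ha
    rw [norm_sub_sq (𝕜 := 𝕜), inner_re_symm]
    linarith
  rw [tendsto_iff_norm_sub_tendsto_zero]
  simpa using hsq.sqrt

lemma summable_norm_mul_norm {ι : Type*} {ζ η : ι → E} (hζ : Summable fun k => ‖ζ k‖ ^ 2)
    (hη : Summable fun k => ‖η k‖ ^ 2) : Summable fun k => ‖ζ k‖ * ‖η k‖ :=
  .of_nonneg_of_le (fun k => by positivity)
    (fun k => by linarith [two_mul_le_add_sq ‖ζ k‖ ‖η k‖]) ((hζ.add hη).mul_left (1 / 2))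

lemma norm_apply_mul_norm_apply_le {X : E →L[𝕜] E} {C : ℝ} (hX : ‖X‖ ≤ C) (u v : E) :
    ‖X u‖ * ‖X v‖ ≤ C ^ 2 * (‖u‖ * ‖v‖) := by
  have hu : ‖X u‖ ≤ C * ‖u‖ := (X.le_opNorm u).trans (by gcongr)
  have hv : ‖X v‖ ≤ C * ‖v‖ := (X.le_opNorm v).trans (by gcongr)
  calc ‖X u‖ * ‖X v‖ ≤ (C * ‖u‖) * (C * ‖v‖) :=
        mul_le_mul hu hv (norm_nonneg _) ((norm_nonneg _).trans hu)
    _ = C ^ 2 * (‖u‖ * ‖v‖) := by ring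

lemma tendsto_tsum_norm_apply_mul_norm_apply {ι : Type*} {l : Filter ι} {X : ι → E →L[𝕜] E}
    {C : ℝ} {ζ η : ℕ → E} (hζ : Summable fun k => ‖ζ k‖ ^ 2) (hη : Summable fun k => ‖η k‖ ^ 2)
    (hX : ∀ i, ‖X i‖ ≤ C) (hlim : ∀ v, Tendsto (fun i => X i v) l (𝓝 0)) :
    Tendsto (fun i => ∑' k, ‖X i (ζ k)‖ * ‖X i (η k)‖) l (𝓝 0) := by
  rw [← tsum_zero (α := ℝ) (β := ℕ)]
  exact tendsto_tsum_of_dominated_convergence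
    ((summable_norm_mul_norm hζ hη).mul_left (C ^ 2))
    (fun k => by simpa using (hlim (ζ k)).norm.mul (hlim (η k)).norm)
    (Eventually.of_forall fun i k => by
      rw [Real.norm_of_nonneg (by positivity)]
      exact norm_apply_mul_norm_apply_le (hX i) _ _)

lemma hasSum_intervalIntegral_inner {F : ℝ → E →L[𝕜] E} {a b C : ℝ} {ζ η : ℕ → E}
    (hζ : Summable fun k => ‖ζ k‖ ^ 2) (hη : Summable fun k => ‖η k‖ ^ 2)
    (hF : ∀ k, IntervalIntegrable (fun c => ⟪ζ k, F c (η k)⟫_𝕜) volume a b)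
    (hC : ∀ c ∈ Ι a b, ‖F c‖ ≤ C) :
    HasSum (fun k => ∫ c in a..b, ⟪ζ k, F c (η k)⟫_𝕜)
      (∫ c in a..b, ∑' k, ⟪ζ k, F c (η k)⟫_𝕜) := by
  have hbound : ∀ c ∈ Ι a b, ∀ k, ‖⟪ζ k, F c (η k)⟫_𝕜‖ ≤ C * (‖ζ k‖ * ‖η k‖) := by
    intro c hc k
    calc ‖⟪ζ k, F c (η k)⟫_𝕜‖ ≤ ‖ζ k‖ * (‖F c‖ * ‖η k‖) :=
          (norm_inner_le_norm _ _).trans (by gcongr; exact (F c).le_opNorm _)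
      _ ≤ ‖ζ k‖ * (C * ‖η k‖) := by gcongr; exact hC c hc
      _ = C * (‖ζ k‖ * ‖η k‖) := by ring
  have hsum := (summable_norm_mul_norm hζ hη).mul_left C
  exact hasSum_integral_of_dominated_convergence (fun k _ => C * (‖ζ k‖ * ‖η k‖))
    (fun k => (hF k).def'.aestronglyMeasurable) (fun k => ae_of_all _ fun c hc => hbound c hc k)
    (ae_of_all _ fun _ _ => hsum) intervalIntegrable_const
    (ae_of_all _ fun c hc => (hsum.of_norm_bounded (hbound c hc)).hasSum)

lemma exists_inner_apply_eq_intervalIntegral [CompleteSpace E] {F : ℝ → E →L[𝕜] E} {a b C : ℝ}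
    (hF : ∀ v w, IntervalIntegrable (fun c => ⟪w, F c v⟫_𝕜) volume a b)
    (hC : ∀ c ∈ Ι a b, ‖F c‖ ≤ C) :
    ∃ Y : E →L[𝕜] E, ∀ v w, ⟪w, Y v⟫_𝕜 = ∫ c in a..b, ⟪w, F c v⟫_𝕜 := by
  -- `B v w` is to be `⟪Y v, w⟫`, conjugate-linear in `v`
  let B : E →L⋆[𝕜] E →L[𝕜] 𝕜 := LinearMap.mkContinuous₂
    (LinearMap.mk₂'ₛₗ (starRingEnd 𝕜) (RingHom.id 𝕜)
      (fun v w => conj (∫ c in a..b, ⟪w, F c v⟫_𝕜))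
      (fun v v' w => by
        simp only [map_add, inner_add_right]
        rw [integral_add (hF v w) (hF v' w), map_add])
      (fun r v w => by
        simp only [map_smul, inner_smul_right, intervalIntegral.integral_const_mul, map_mul,
          smul_eq_mul])
      (fun v w w' => by
        simp only [inner_add_left]
        rw [integral_add (hF v w) (hF v w'), map_add])
      (fun r v w => by
        simp only [inner_smul_left, intervalIntegral.integral_const_mul, map_mul, conj_conj,
          RingHom.id_apply, smul_eq_mul]))
    (C * |b - a|) (fun v w => by
      rw [LinearMap.mk₂'ₛₗ_apply, norm_conj]
      refine (intervalIntegral.norm_integral_le_of_norm_le_const (C := C * ‖v‖ * ‖w‖)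
        fun c hc => ?_).trans_eq (by ring)
      calc ‖⟪w, F c v⟫_𝕜‖ ≤ ‖w‖ * (‖F c‖ * ‖v‖) :=
            (norm_inner_le_norm _ _).trans (by gcongr; exact (F c).le_opNorm _)
        _ ≤ ‖w‖ * (C * ‖v‖) := by gcongr; exact hC c hc
        _ = C * ‖v‖ * ‖w‖ := by ring)
  refine ⟨InnerProductSpace.continuousLinearMapOfBilin B, fun v w => ?_⟩
  rw [← inner_conj_symm, InnerProductSpace.continuousLinearMapOfBilin_apply]
  simp [B]

end InnerProductSpace

lemma VonNeumannAlgebra.mem_of_inner_apply_eq_intervalIntegral {H : Type*}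
    [NormedAddCommGroup H] [InnerProductSpace ℂ H] [CompleteSpace H] {M : VonNeumannAlgebra H}
    {F : ℝ → H →L[ℂ] H} {a b : ℝ} (hFM : ∀ c ∈ uIcc a b, F c ∈ M) {Y : H →L[ℂ] H}
    (hY : ∀ v w, ⟪w, Y v⟫_ℂ = ∫ c in a..b, ⟪w, F c v⟫_ℂ) : Y ∈ M := by
  change Y ∈ (M : Set (H →L[ℂ] H))
  rw [← M.centralizer_centralizer]
  intro T hT
  ext v
  refine ext_inner_left ℂ fun w => ?_
  change ⟪w, T (Y v)⟫_ℂ = ⟪w, Y (T v)⟫_ℂ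
  rw [← adjoint_inner_left, hY, hY]
  refine integral_congr fun c hc => ?_
  rw [adjoint_inner_left, ← mul_apply_eq_comp, ← hT (F c) (hFM c hc), mul_apply_eq_comp]

lemma normalFunctionalOn_inner {H : Type*} [NormedAddCommGroup H] [InnerProductSpace ℂ H]
    [CompleteSpace H] (M : Set (H →L[ℂ] H)) (w v : H) :
    NormalFunctionalOn M fun X => ⟪w, X v⟫_ℂ := by
  classical
  refine ⟨fun n => if n = 0 then w else 0, fun n => if n = 0 then v else 0, ?_, ?_, fun X _ => ?_⟩
  · simpa [apply_ite] using (hasSum_ite_eq 0 (‖w‖ ^ 2)).summable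
  · simpa [apply_ite] using (hasSum_ite_eq 0 (‖v‖ ^ 2)).summable
  · simp [apply_ite]

lemma norm_tsum_inner_star_mul_self_apply_le {H : Type*} [NormedAddCommGroup H]
    [InnerProductSpace ℂ H] [CompleteSpace H] {ζ η : ℕ → H} (hζ : Summable fun k => ‖ζ k‖ ^ 2)
    (hη : Summable fun k => ‖η k‖ ^ 2) (X : H →L[ℂ] H) :
    ‖∑' k, ⟪ζ k, (star X * X) (η k)⟫_ℂ‖ ≤ ∑' k, ‖X (ζ k)‖ * ‖X (η k)‖ := by
  have hsum : Summable fun k => ‖X (ζ k)‖ * ‖X (η k)‖ :=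
    .of_nonneg_of_le (fun k => by positivity) (fun k => norm_apply_mul_norm_apply_le le_rfl _ _)
      ((summable_norm_mul_norm hζ hη).mul_left _)
  refine tsum_of_norm_bounded hsum.hasSum fun k => ?_
  rw [star_eq_adjoint, mul_apply_eq_comp, adjoint_inner_right]
  exact norm_inner_le_norm _ _

namespace CPSemigroup

variable {H : Type*} [NormedAddCommGroup H] [InnerProductSpace ℂ H] [CompleteSpace H]
  {M : VonNeumannAlgebra H} (S : CPSemigroup M) {s t δ : ℝ} {A B Y : H →L[ℂ] H}

lemma norm_φ_apply_le (ht : 0 ≤ t) (hA : A ∈ M) (v : H) : ‖S.φ t A v‖ ≤ ‖A‖ * ‖v‖ :=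
  ((S.φ t A).le_opNorm v).trans (by gcongr; exact S.contractive t ht A hA)

lemma norm_inner_φ_apply_le (ht : 0 ≤ t) (hA : A ∈ M) (w v : H) :
    ‖⟪w, S.φ t A v⟫_ℂ‖ ≤ ‖w‖ * (‖A‖ * ‖v‖) :=
  (norm_inner_le_norm _ _).trans (by gcongr; exact S.norm_φ_apply_le ht hA v)

lemma intervalIntegrable_inner_φ_apply (hA : A ∈ M) (w v : H) {a b : ℝ} (ha : 0 ≤ a)
    (hb : 0 ≤ b) : IntervalIntegrable (fun c => ⟪w, S.φ c A v⟫_ℂ) volume a b :=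
  ContinuousOn.intervalIntegrable fun c hc =>
    (S.pointWeakContinuous A hA v w c ((le_min ha hb).trans hc.1)).mono_left
      (nhdsWithin_mono _ fun _ hx => (le_min ha hb).trans hx.1)

lemma norm_intervalIntegral_inner_φ_apply_le (hA : A ∈ M) {a b : ℝ} (ha : 0 ≤ a) (hb : 0 ≤ b)
    (w v : H) : ‖∫ c in a..b, ⟪w, S.φ c A v⟫_ℂ‖ ≤ ‖w‖ * (‖A‖ * ‖v‖) * |b - a| :=
  intervalIntegral.norm_integral_le_of_norm_le_const fun _ hc =>
    S.norm_inner_φ_apply_le ((le_min ha hb).trans hc.1.le) hA w v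

lemma completelyPositive_two (ht : 0 ≤ t) (hB : B ∈ M) (w v : H) (l : ℂ) :
    0 ≤ conj l * l * ⟪w, S.φ t 1 w⟫_ℂ + conj l * ⟪w, S.φ t B v⟫_ℂ
      + l * ⟪v, S.φ t (star B) w⟫_ℂ + ⟪v, S.φ t (star B * B) v⟫_ℂ := by
  have h := S.completelyPositive t ht 2 ![1, B] (Fin.forall_fin_two.2 ⟨one_mem M, hB⟩)
    ![l • w, v]
  simp only [Fin.sum_univ_two, Matrix.cons_val_zero, Matrix.cons_val_one,
    star_one, one_mul, mul_one, map_smul, inner_smul_left, inner_smul_right] at h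
  convert h using 1
  ring

lemma inner_φ_star_apply (ht : 0 ≤ t) (hB : B ∈ M) (w v : H) :
    ⟪v, S.φ t (star B) w⟫_ℂ = conj ⟪w, S.φ t B v⟫_ℂ := by
  -- the form of `completelyPositive_two` is real for every `l`; `l = ±1, ±i` separate the terms
  have him (l : ℂ) := (Complex.le_def.mp (S.completelyPositive_two ht hB w v l)).2
  have h1 := him 1
  have h2 := him (-1)
  have h3 := him Complex.I
  have h4 := him (-Complex.I)
  simp only [map_one, one_mul, mul_one, map_neg, Complex.conj_I, neg_mul, mul_neg, neg_neg,
    Complex.add_im, Complex.neg_im, Complex.mul_im, Complex.I_re, Complex.I_im,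
    Complex.zero_im, zero_mul, mul_zero] at h1 h2 h3 h4
  apply Complex.ext
  · simp only [Complex.conj_re]; linarith
  · simp only [Complex.conj_im]; linarith

lemma norm_φ_apply_sq_le (ht : 0 ≤ t) (hB : B ∈ M) (v : H) :
    ‖S.φ t B v‖ ^ 2 ≤ re ⟪v, S.φ t (star B * B) v⟫_ℂ := by
  set w := S.φ t B v
  have hpos := (Complex.le_def.mp (S.completelyPositive_two ht hB w v (-1))).1
  have hw : ⟪w, S.φ t B v⟫_ℂ = (‖w‖ : ℂ) ^ 2 := inner_self_eq_norm_sq_to_K w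
  have hunit : re ⟪w, S.φ t 1 w⟫_ℂ ≤ ‖w‖ ^ 2 := by
    have h1 : ‖(1 : H →L[ℂ] H)‖ ≤ 1 := norm_id_le
    calc re ⟪w, S.φ t 1 w⟫_ℂ ≤ ‖w‖ * (‖(1 : H →L[ℂ] H)‖ * ‖w‖) :=
          (re_le_norm _).trans (S.norm_inner_φ_apply_le ht (one_mem M) w w)
      _ ≤ ‖w‖ ^ 2 := by nlinarith [norm_nonneg w]
  rw [S.inner_φ_star_apply ht hB, hw] at hpos
  simp only [map_neg, map_one, neg_mul, one_mul, neg_neg, mul_neg, Complex.add_re,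
    Complex.neg_re, Complex.zero_re, map_pow, Complex.conj_ofReal] at hpos
  norm_cast at hpos
  rw [← RCLike.re_eq_complex_re] at hpos
  linarith

lemma tendsto_φ_apply_nhdsWithin_zero (hB : B ∈ M) (v : H) :
    Tendsto (fun t => S.φ t B v) (𝓝[≥] 0) (𝓝 (B v)) := by
  have hBB : star B * B ∈ M := mul_mem (star_mem hB) hB
  have hweak := S.pointWeakContinuous B hB v (B v) 0 le_rfl
  have hsq := (continuous_re.tendsto _).comp
    (S.pointWeakContinuous (star B * B) hBB v v 0 le_rfl)
  rw [S.map_id B hB] at hweak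
  rw [S.map_id _ hBB, star_eq_adjoint, mul_apply_eq_comp, adjoint_inner_right,
    inner_self_eq_norm_sq] at hsq
  refine tendsto_of_tendsto_inner_of_norm_sq_le hweak ?_ hsq
  filter_upwards [self_mem_nhdsWithin] with t ht using S.norm_φ_apply_sq_le ht hB v

/-- Weak form of `Y = δ⁻¹ ∫₀^δ φ_c(A) dc`: the integral cannot be taken in norm, as `c ↦ φ_c(A)`
is only point-weakly continuous. -/
def IsAverage (δ : ℝ) (A Y : H →L[ℂ] H) : Prop :=
  ∀ w v : H, ⟪w, Y v⟫_ℂ = (δ : ℂ)⁻¹ * ∫ c in (0 : ℝ)..δ, ⟪w, S.φ c A v⟫_ℂ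

lemma exists_isAverage (hδ : 0 < δ) (hA : A ∈ M) : ∃ Y, S.IsAverage δ A Y := by
  obtain ⟨Y, hY⟩ := exists_inner_apply_eq_intervalIntegral (F := fun c => S.φ c A) (C := ‖A‖)
    (fun v w => S.intervalIntegrable_inner_φ_apply hA w v le_rfl hδ.le)
    (fun c hc => S.contractive c (le_min le_rfl hδ.le |>.trans hc.1.le) A hA)
  exact ⟨(δ : ℂ)⁻¹ • Y, fun w v => by rw [smul_apply, inner_smul_right, hY]⟩

variable {S}

lemma IsAverage.mem (hY : S.IsAverage δ A Y) (hδ : 0 ≤ δ) (hA : A ∈ M) : Y ∈ M := by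
  refine VonNeumannAlgebra.mem_of_inner_apply_eq_intervalIntegral
    (F := fun c => (δ : ℂ)⁻¹ • S.φ c A) (a := 0) (b := δ) (fun c hc => ?_) (fun v w => ?_)
  · rw [uIcc_of_le hδ] at hc
    exact M.smul_mem (S.mapsTo c hc.1 A hA) _
  · simp only [smul_apply, inner_smul_right, intervalIntegral.integral_const_mul, hY w v]

lemma IsAverage.norm_le (hY : S.IsAverage δ A Y) (hδ : 0 < δ) (hA : A ∈ M) : ‖Y‖ ≤ ‖A‖ := by
  refine opNorm_le_bound _ (norm_nonneg _) fun v =>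
    norm_le_of_forall_norm_inner_le (𝕜 := ℂ) (by positivity) fun w => ?_
  rw [hY, norm_mul, norm_inv, Complex.norm_real, Real.norm_of_nonneg hδ.le]
  calc δ⁻¹ * ‖∫ c in (0 : ℝ)..δ, ⟪w, S.φ c A v⟫_ℂ‖
      ≤ δ⁻¹ * (‖w‖ * (‖A‖ * ‖v‖) * |δ - 0|) := by
        gcongr; exact S.norm_intervalIntegral_inner_φ_apply_le hA le_rfl hδ.le w v
    _ = ‖A‖ * ‖v‖ * ‖w‖ := by
        rw [sub_zero, abs_of_pos hδ]; field_simp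

lemma IsAverage.norm_apply_sub_le (hY : S.IsAverage δ A Y) (hδ : 0 < δ) (hA : A ∈ M) {v : H}
    {ε : ℝ} (hε : ∀ c ∈ Ioc 0 δ, ‖S.φ c A v - A v‖ ≤ ε) : ‖Y v - A v‖ ≤ ε := by
  refine norm_le_of_forall_norm_inner_le (𝕜 := ℂ) ((norm_nonneg _).trans (hε δ ⟨hδ, le_rfl⟩))
    fun w => ?_
  have hint : ⟪w, Y v - A v⟫_ℂ = (δ : ℂ)⁻¹ * ∫ c in (0 : ℝ)..δ, ⟪w, S.φ c A v - A v⟫_ℂ := by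
    simp only [inner_sub_right]
    rw [intervalIntegral.integral_sub (S.intervalIntegrable_inner_φ_apply hA w v le_rfl hδ.le)
      intervalIntegrable_const, intervalIntegral.integral_const, hY, sub_zero, Complex.real_smul]
    field_simp
  rw [hint, norm_mul, norm_inv, Complex.norm_real, Real.norm_of_nonneg hδ.le]
  calc δ⁻¹ * ‖∫ c in (0 : ℝ)..δ, ⟪w, S.φ c A v - A v⟫_ℂ‖ ≤ δ⁻¹ * (‖w‖ * ε * |δ - 0|) := by
        gcongr
        refine intervalIntegral.norm_integral_le_of_norm_le_const fun c hc => ?_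
        rw [uIoc_of_le hδ.le] at hc
        exact (norm_inner_le_norm _ _).trans (by gcongr; exact hε c hc)
    _ = ε * ‖w‖ := by rw [sub_zero, abs_of_pos hδ]; field_simp

lemma tendsto_apply_of_isAverage {ι : Type*} {l : Filter ι} {δ : ι → ℝ}
    {Y : ι → H →L[ℂ] H} (hδ : ∀ i, 0 < δ i) (hδ₀ : Tendsto δ l (𝓝 0))
    (hY : ∀ i, S.IsAverage (δ i) A (Y i)) (hA : A ∈ M) (v : H) :
    Tendsto (fun i => Y i v) l (𝓝 (A v)) := by
  refine Metric.tendsto_nhds.2 fun ε hε => ?_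
  obtain ⟨ρ, hρ, hφ⟩ :=
    Metric.tendsto_nhdsWithin_nhds.1 (S.tendsto_φ_apply_nhdsWithin_zero hA v) (ε / 2)
      (half_pos hε)
  filter_upwards [hδ₀.eventually (gt_mem_nhds hρ)] with i hi
  rw [dist_eq_norm]
  refine ((hY i).norm_apply_sub_le (hδ i) hA fun c hc => ?_).trans_lt (half_lt_self hε)
  rw [← dist_eq_norm]
  refine (hφ hc.1.le ?_).le
  rw [Real.dist_0_eq_abs, abs_of_pos hc.1]
  exact hc.2.trans_lt hi

lemma IsAverage.inner_φ_apply (hY : S.IsAverage δ A Y) (hδ : 0 ≤ δ) (hA : A ∈ M) (ht : 0 ≤ t)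
    (w v : H) :
    ⟪w, S.φ t Y v⟫_ℂ = (δ : ℂ)⁻¹ * ∫ c in t..t + δ, ⟪w, S.φ c A v⟫_ℂ := by
  obtain ⟨ζ, η, hζ, hη, hrep⟩ := S.normal t ht _ (normalFunctionalOn_inner _ w v)
  have hsum := hasSum_intervalIntegral_inner (F := fun c => S.φ c A) (a := 0) (b := δ) hζ hη
    (fun k => S.intervalIntegrable_inner_φ_apply hA _ _ le_rfl hδ)
    (fun c hc => S.contractive c (le_min le_rfl hδ |>.trans hc.1.le) A hA)
  calc ⟪w, S.φ t Y v⟫_ℂ = ∑' k, ⟪ζ k, Y (η k)⟫_ℂ := hrep Y (hY.mem hδ hA)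
    _ = (δ : ℂ)⁻¹ * ∫ c in (0 : ℝ)..δ, ∑' k, ⟪ζ k, S.φ c A (η k)⟫_ℂ := by
        rw [tsum_congr fun k => hY (ζ k) (η k), tsum_mul_left, hsum.tsum_eq]
    _ = (δ : ℂ)⁻¹ * ∫ c in (0 : ℝ)..δ, ⟪w, S.φ (t + c) A v⟫_ℂ := by
        congr 1
        refine intervalIntegral.integral_congr fun c hc => ?_
        rw [uIcc_of_le hδ] at hc
        simp only [S.semigroup t c ht hc.1 A hA, hrep _ (S.mapsTo c hc.1 A hA)]
    _ = (δ : ℂ)⁻¹ * ∫ c in t..t + δ, ⟪w, S.φ c A v⟫_ℂ := by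
        rw [intervalIntegral.integral_comp_add_left (fun c => ⟪w, S.φ c A v⟫_ℂ), add_zero]

lemma IsAverage.norm_φ_apply_sub_φ_apply_le (hY : S.IsAverage δ A Y) (hδ : 0 < δ)
    (hA : A ∈ M) (hs : 0 ≤ s) (ht : 0 ≤ t) (v : H) :
    ‖S.φ s Y v - S.φ t Y v‖ ≤ 2 * δ⁻¹ * (‖A‖ * ‖v‖) * |s - t| := by
  refine norm_le_of_forall_norm_inner_le (𝕜 := ℂ) (by positivity) fun w => ?_
  have hint {a b : ℝ} (ha : 0 ≤ a) (hb : 0 ≤ b) :=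
    S.intervalIntegrable_inner_φ_apply hA w v ha hb
  have hbd {a b : ℝ} (ha : 0 ≤ a) (hb : 0 ≤ b) :=
    S.norm_intervalIntegral_inner_φ_apply_le hA ha hb w v
  have hsδ : 0 ≤ s + δ := by positivity
  have htδ : 0 ≤ t + δ := by positivity
  -- the two windows `[s, s + δ]` and `[t, t + δ]` differ by two intervals of length `|s - t|`
  rw [inner_sub_right, hY.inner_φ_apply hδ.le hA hs, hY.inner_φ_apply hδ.le hA ht, ← mul_sub,
    intervalIntegral.integral_interval_sub_interval_comm (hint hs hsδ) (hint ht htδ)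
      (hint hs ht), norm_mul, norm_inv, Complex.norm_real, Real.norm_of_nonneg hδ.le]
  calc δ⁻¹ * ‖(∫ c in s..t, ⟪w, S.φ c A v⟫_ℂ) - ∫ c in s + δ..t + δ, ⟪w, S.φ c A v⟫_ℂ‖
      ≤ δ⁻¹ * (‖w‖ * (‖A‖ * ‖v‖) * |t - s| + ‖w‖ * (‖A‖ * ‖v‖) * |t + δ - (s + δ)|) := by
        gcongr; exact norm_sub_le_of_le (hbd hs ht) (hbd hsδ htδ)
    _ = 2 * δ⁻¹ * (‖A‖ * ‖v‖) * |s - t| * ‖w‖ := by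
        rw [add_sub_add_right_eq_sub, abs_sub_comm]; ring

lemma IsAverage.continuousOn_φ_apply (hY : S.IsAverage δ A Y) (hδ : 0 < δ) (hA : A ∈ M)
    (v : H) : ContinuousOn (fun t => S.φ t Y v) (Ici 0) :=
  (LipschitzOnWith.of_dist_le' (K := 2 * δ⁻¹ * (‖A‖ * ‖v‖)) fun s hs t ht => by
    simpa only [dist_eq_norm, Real.norm_eq_abs] using
      hY.norm_φ_apply_sub_φ_apply_le hδ hA hs ht v).continuousOn

variable (S)

lemma eventually_norm_φ_apply_lt {X : H →L[ℂ] H} (hX : X ∈ M) {ξ : H} {t₀ ε : ℝ}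
    (ht₀ : 0 ≤ t₀) (hε : 0 ≤ ε) (h : re ⟪ξ, S.φ t₀ (star X * X) ξ⟫_ℂ < ε ^ 2) :
    ∀ᶠ t in 𝓝[Ici 0] t₀, ‖S.φ t X ξ‖ < ε := by
  have hre := (continuous_re.tendsto _).comp
    (S.pointWeakContinuous _ (mul_mem (star_mem hX) hX) ξ ξ t₀ ht₀)
  filter_upwards [hre.eventually (gt_mem_nhds h), self_mem_nhdsWithin] with t hlt ht
  exact lt_of_pow_lt_pow_left₀ 2 hε ((S.norm_φ_apply_sq_le ht hX ξ).trans_lt hlt)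

end CPSemigroup

/-- **Main theorem.** A CP-semigroup is continuous in the point-strong operator topology:
for every `A ∈ M`, `ξ ∈ H` and `t₀ ≥ 0`, `‖φ_t(A)ξ − φ_{t₀}(A)ξ‖ → 0` as `t → t₀`
(two-sided limit, `t` ranging over `[0,∞)`). -/
theorem cpSemigroup_pointStrong_continuous {H : Type*} [NormedAddCommGroup H]
    [InnerProductSpace ℂ H] [CompleteSpace H] {M : VonNeumannAlgebra H}
    (S : CPSemigroup M) (A : H →L[ℂ] H) (hA : A ∈ M) (ξ : H) (t₀ : ℝ) (ht₀ : 0 ≤ t₀) :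
    Filter.Tendsto (fun t : ℝ => ‖S.φ t A ξ - S.φ t₀ A ξ‖)
      (nhdsWithin t₀ (Set.Ici 0)) (nhds 0) := by
  obtain ⟨ζ, η, hζ, hη, hrep⟩ := S.normal t₀ ht₀ _ (normalFunctionalOn_inner _ ξ ξ)
  have hδ (n : ℕ) : (0 : ℝ) < 1 / (n + 1) := Nat.one_div_pos_of_nat
  choose Y hY using fun n => S.exists_isAverage (hδ n) hA
  have hsmall : Tendsto (fun n => ∑' k, ‖(A - Y n) (ζ k)‖ * ‖(A - Y n) (η k)‖) atTop (𝓝 0) :=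
    tendsto_tsum_norm_apply_mul_norm_apply hζ hη
      (fun n => (norm_sub_le _ _).trans (add_le_add le_rfl ((hY n).norm_le (hδ n) hA)))
      fun v => by simpa using ((CPSemigroup.tendsto_apply_of_isAverage hδ
        tendsto_one_div_add_atTop_nhds_zero_nat hY hA v).const_sub (A v))
  rw [← tendsto_iff_norm_sub_tendsto_zero]
  refine continuousWithinAt_of_locally_uniform_approx_of_continuousWithinAt ht₀ fun u hu => ?_
  obtain ⟨ε, hε, hεu⟩ := Metric.mem_uniformity_dist.1 hu
  obtain ⟨n, hn⟩ := (hsmall.eventually (gt_mem_nhds (pow_pos hε 2))).exists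
  have hZ : A - Y n ∈ M := sub_mem hA ((hY n).mem (hδ n).le hA)
  have h₀ : re ⟪ξ, S.φ t₀ (star (A - Y n) * (A - Y n)) ξ⟫_ℂ < ε ^ 2 :=
    calc re ⟪ξ, S.φ t₀ (star (A - Y n) * (A - Y n)) ξ⟫_ℂ
        ≤ ‖∑' k, ⟪ζ k, (star (A - Y n) * (A - Y n)) (η k)⟫_ℂ‖ :=
          (re_le_norm _).trans_eq (congrArg norm (hrep _ (mul_mem (star_mem hZ) hZ)))
      _ ≤ ∑' k, ‖(A - Y n) (ζ k)‖ * ‖(A - Y n) (η k)‖ :=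
          norm_tsum_inner_star_mul_self_apply_le hζ hη _
      _ < ε ^ 2 := hn
  refine ⟨_, S.eventually_norm_φ_apply_lt hZ ht₀ hε.le h₀, fun t => S.φ t (Y n) ξ,
    (hY n).continuousOn_φ_apply (hδ n) hA ξ t₀ ht₀, fun t ht => hεu ?_⟩
  rwa [dist_eq_norm, ← sub_apply, ← map_sub]
end

section
/- Let φ be a CP-semigroup on a von Neumann algebra M ⊆ B(H), let (A_n) be a norm-bounded sequence in M converging to A ∈ M in the σ-strong* topology, and let t₀ ≥ 0. Then for every sequence t_k → t₀ (t_k ≥ 0), every ξ ∈ H and every ε > 0, there exists N ∈ ℕ such that for all n ≥ N, ‖φ_{t_k}(A_n − A)ξ‖ < ε for all k simultaneously (i.e., the convergence φ_{t_k}(A_n − A)ξ → 0 as n → ∞ is uniform in k). -/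
open scoped InnerProductSpace ComplexOrder
open Filter Topology MeasureTheory

/-! Kadison–Schwarz for the completely positive contractions `φ_t` gives
`‖φ_t(B)ξ‖² ≤ re ⟪ξ, φ_t(B* B) ξ⟫`, so after rescaling `Bₙ = Aₙ - L` into the unit ball it
suffices that the normal functionals `ρₖ = ⟪ξ, φ_{t_k}(·) ξ⟫`, which converge pointwise on `M`
because `t_k → t₀`, tend to `0` uniformly in `k` along the positive contractions `Qₙ = Bₙ* Bₙ`,
which tend to `0` strongly.

This is a noncommutative Vitali–Hahn–Saks argument. The positive unit ball of `M` is compact in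
the weak operator topology, hence a Baire space, and the `ρₖ` are continuous on it. Baire yields
an `X` in the ball and a neighbourhood of `X` on which `(ρₖ)` is uniformly Cauchy from some index
`N` on. Both `zₙ = (1 - Qₙ) X (1 - Qₙ)` and `yₙ = zₙ + Qₙ` lie in the ball and tend to `X`, and
`Qₙ = yₙ - zₙ`, so `|ρₖ(Qₙ)|` is eventually small for `k ≥ N`; the finitely many `k < N` are
handled one at a time. -/

theorem summable_norm_mul_norm_of_summable_sq {ι E F : Type*} [SeminormedAddCommGroup E]
    [SeminormedAddCommGroup F] {u : ι → E} {v : ι → F} (hu : Summable fun i => ‖u i‖ ^ 2)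
    (hv : Summable fun i => ‖v i‖ ^ 2) : Summable fun i => ‖u i‖ * ‖v i‖ :=
  Real.summable_mul_of_Lp_Lq_of_nonneg .two_two (fun _ => norm_nonneg _) (fun _ => norm_nonneg _)
    (by simpa only [Real.rpow_two] using hu) (by simpa only [Real.rpow_two] using hv)

theorem ContinuousLinearMap.tendsto_apply_of_tendsto {𝕜 E F ι : Type*} [NontriviallyNormedField 𝕜]
    [NormedAddCommGroup E] [NormedSpace 𝕜 E] [NormedAddCommGroup F] [NormedSpace 𝕜 F]
    {l : Filter ι} {S : ι → E →L[𝕜] F} {S₀ : E →L[𝕜] F} {C : ℝ} (hSC : ∀ i, ‖S i‖ ≤ C)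
    (hS : ∀ x, Tendsto (fun i => S i x) l (𝓝 (S₀ x))) {v : ι → E} {v₀ : E}
    (hv : Tendsto v l (𝓝 v₀)) : Tendsto (fun i => S i (v i)) l (𝓝 (S₀ v₀)) := by
  have hdiff : Tendsto (fun i => S i (v i - v₀)) l (𝓝 0) :=
    squeeze_zero_norm (fun i => (S i).le_of_opNorm_le (hSC i) _)
      (by simpa using (tendsto_iff_norm_sub_tendsto_zero.mp hv).const_mul C)
  simpa using hdiff.add (hS v₀)

theorem summable_norm_pi_single_sq {E : Type*} [SeminormedAddCommGroup E] (i : ℕ) (x : E) :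
    Summable fun n => ‖(Pi.single i x : ℕ → E) n‖ ^ 2 :=
  summable_of_ne_finset_zero (s := {i}) fun n hn => by simp_all

open ComplexConjugate in
theorem Complex.le_re_of_forall_nonneg_quadratic {p b s : ℂ} {r : ℝ}
    (h : ∀ c : ℂ, 0 ≤ conj c * c * p + conj c * r + c * b + s) (hp : p.re ≤ r) : r ≤ s.re := by
  have h₁ := h 1
  have h₂ := h (-1)
  have h₃ := h I
  simp only [nonneg_iff, map_one, map_neg, conj_I, mul_one, one_mul, add_re, ofReal_re, add_im,
    ofReal_im, add_zero, mul_neg, neg_neg, neg_mul, neg_re, neg_im, neg_zero, I_mul_I, mul_re,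
    I_re, zero_mul, I_im, mul_zero, sub_self, zero_sub, mul_im, zero_add] at h₁ h₂ h₃
  linarith

theorem ContinuousLinearMap.le_iff_forall_inner_le {H : Type*} [NormedAddCommGroup H]
    [InnerProductSpace ℂ H] {S T : H →L[ℂ] H} :
    S ≤ T ↔ ∀ x, ⟪x, S x⟫_ℂ ≤ ⟪x, T x⟫_ℂ := by
  refine (isPositive_iff_complex (T - S)).trans (forall_congr' fun x => ?_)
  have hconj : ⟪x, S x⟫_ℂ ≤ ⟪x, T x⟫_ℂ ↔ 0 ≤ ⟪(T - S) x, x⟫_ℂ := by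
    rw [← star_nonneg_iff, Complex.star_def, inner_conj_symm, sub_apply, inner_sub_right,
      sub_nonneg]
  rw [hconj]
  generalize ⟪(T - S) x, x⟫_ℂ = z
  rw [Complex.nonneg_iff, Complex.ext_iff]
  simp only [RCLike.re_to_complex, Complex.ofReal_re, Complex.ofReal_im, true_and]
  exact and_comm

section ConjugateIcc

variable {A : Type*} [CStarAlgebra A] [PartialOrder A] [StarOrderedRing A] {x q : A}

theorem conjugate_one_sub_add_mem_Icc (hx : x ∈ Set.Icc 0 1) (hq : q ∈ Set.Icc 0 1) :
    (1 - q) * x * (1 - q) + q ∈ Set.Icc 0 1 := by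
  have hsa : IsSelfAdjoint (1 - q) := .sub (.one A) (.of_nonneg hq.1)
  refine ⟨add_nonneg (hsa.conjugate_nonneg hx.1) hq.1, ?_⟩
  calc (1 - q) * x * (1 - q) + q ≤ (1 - q) * 1 * (1 - q) + q := by
        gcongr; exact hsa.conjugate_le_conjugate hx.2
    _ = 1 - q * (1 - q) := by noncomm_ring
    _ ≤ 1 := sub_le_self _ <| Commute.mul_nonneg hq.1 (sub_nonneg.mpr hq.2)
        ((Commute.one_right q).sub_right (Commute.refl q))

theorem conjugate_one_sub_mem_Icc (hx : x ∈ Set.Icc 0 1) (hq : q ∈ Set.Icc 0 1) :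
    (1 - q) * x * (1 - q) ∈ Set.Icc 0 1 :=
  ⟨(IsSelfAdjoint.sub (.one A) (.of_nonneg hq.1)).conjugate_nonneg hx.1,
    (le_add_of_nonneg_right hq.1).trans (conjugate_one_sub_add_mem_Icc hx hq).2⟩

end ConjugateIcc

theorem BaireSpace.exists_eventually_forall_dist_le {X E : Type*} [TopologicalSpace X]
    [BaireSpace X] [Nonempty X] [PseudoMetricSpace E] {f : ℕ → X → E}
    (hf : ∀ j, Continuous (f j)) (hcauchy : ∀ x, CauchySeq fun j => f j x)
    {ε : ℝ} (hε : 0 < ε) :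
    ∃ x₀ : X, ∃ N : ℕ, ∀ᶠ x in 𝓝 x₀, ∀ j ≥ N, ∀ k ≥ N, dist (f j x) (f k x) ≤ ε := by
  set F : ℕ → Set X := fun N => {x | ∀ j ≥ N, ∀ k ≥ N, dist (f j x) (f k x) ≤ ε}
  have hclosed (N : ℕ) : IsClosed (F N) := by
    simp only [F, Set.ofPred_forall]
    exact isClosed_iInter fun j => isClosed_iInter fun _ => isClosed_iInter fun k =>
      isClosed_iInter fun _ => isClosed_le ((hf j).dist (hf k)) continuous_const
  have hcover : ⋃ N, F N = Set.univ := Set.eq_univ_of_forall fun x => by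
    obtain ⟨N, hN⟩ := Metric.cauchySeq_iff.mp (hcauchy x) ε hε
    exact Set.mem_iUnion.mpr ⟨N, fun j hj k hk => (hN j hj k hk).le⟩
  obtain ⟨N, x₀, hx₀⟩ := nonempty_interior_of_iUnion_of_closed hclosed hcover
  exact ⟨x₀, N, mem_interior_iff_mem_nhds.mp hx₀⟩

theorem BaireSpace.tendstoUniformly_of_eq_sub {X E : Type*} [TopologicalSpace X]
    [BaireSpace X] [Nonempty X] [SeminormedAddCommGroup E] {f : ℕ → X → E}
    (hf : ∀ j, Continuous (f j)) (hcauchy : ∀ x, CauchySeq fun j => f j x)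
    {g : ℕ → ℕ → E} (hg : ∀ x, ∃ y z : ℕ → X, Tendsto y atTop (𝓝 x) ∧
      Tendsto z atTop (𝓝 x) ∧ ∀ n j, g n j = f j (y n) - f j (z n)) :
    TendstoUniformly g 0 atTop := by
  rw [Metric.tendstoUniformly_iff]
  intro ε hε
  obtain ⟨x₀, N, hN⟩ := exists_eventually_forall_dist_le hf hcauchy (by positivity : 0 < ε / 3)
  obtain ⟨y, z, hy, hz, hgyz⟩ := hg x₀
  have hsmall : ∀ j, Tendsto (fun n => g n j) atTop (𝓝 0) := fun j => by
    simpa [hgyz] using ((hf j).tendsto x₀).comp hy |>.sub (((hf j).tendsto x₀).comp hz)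
  have hfin : ∀ᶠ n in atTop, ∀ j ∈ Finset.range (N + 1), ‖g n j‖ < ε / 3 :=
    (Filter.eventually_all_finset _).mpr fun j _ =>
      (hsmall j).norm.eventually (gt_mem_nhds (by rw [norm_zero]; positivity))
  filter_upwards [hfin, hy.eventually hN, hz.eventually hN] with n hn hyn hzn j
  rw [Pi.zero_apply, dist_zero_left]
  rcases le_or_gt j N with hjN | hNj
  · linarith [hn j (Finset.mem_range.mpr (Nat.lt_succ_of_le hjN))]
  have hsplit : g n j = (f j (y n) - f N (y n)) - (f j (z n) - f N (z n)) + g n N := by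
    rw [hgyz, hgyz]; abel
  calc ‖g n j‖ ≤ ‖f j (y n) - f N (y n)‖ + ‖f j (z n) - f N (z n)‖ + ‖g n N‖ := by
        rw [hsplit]; exact (norm_add_le _ _).trans (by gcongr; exact norm_sub_le _ _)
    _ < ε := by
        rw [← dist_eq_norm, ← dist_eq_norm]
        linarith [hyn j hNj.le N le_rfl, hzn j hNj.le N le_rfl,
          hn N (Finset.self_mem_range_succ N)]

namespace ContinuousLinearMapWOT

theorem isClosed_setOf_toCLM_mem_centralizer {𝕜 F : Type*} [RCLike 𝕜] [NormedAddCommGroup F]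
    [NormedSpace 𝕜 F] (s : Set (F →L[𝕜] F)) :
    IsClosed {T : F →WOT[𝕜] F | T.toCLM ∈ s.centralizer} := by
  have hcomm (T : F →WOT[𝕜] F) (m : F →L[𝕜] F) :
      m * T.toCLM = T.toCLM * m ↔ (ofCLM m).comp T = T.comp (ofCLM m) :=
    (equiv.symm.injective.eq_iff).symm
  simp only [Set.mem_centralizer_iff, hcomm, Set.ofPred_forall]
  exact isClosed_iInter fun m => isClosed_iInter fun _ =>
    isClosed_eq (continuous_postcomp _) (continuous_precomp _)

variable {𝕜 F : Type*} [RCLike 𝕜] [NormedAddCommGroup F] [InnerProductSpace 𝕜 F]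

theorem norm_inner_apply_le {T : F →WOT[𝕜] F} {r : ℝ} (hT : ‖T.toCLM‖ ≤ r) (x y : F) :
    ‖⟪y, T x⟫_𝕜‖ ≤ r * ‖x‖ * ‖y‖ :=
  calc ‖⟪y, T x⟫_𝕜‖ ≤ ‖y‖ * (‖T.toCLM‖ * ‖x‖) :=
        (norm_inner_le_norm _ _).trans (by gcongr; exact T.toCLM.le_opNorm x)
    _ ≤ r * ‖x‖ * ‖y‖ := by rw [mul_comm]; gcongr

variable [CompleteSpace F]

theorem tendsto_ofCLM_of_tendsto_apply {E ι : Type*} [NormedAddCommGroup E] [NormedSpace 𝕜 E]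
    {l : Filter ι} {T : ι → E →L[𝕜] F} {T₀ : E →L[𝕜] F}
    (h : ∀ x, Tendsto (fun i => T i x) l (𝓝 (T₀ x))) :
    Tendsto (fun i => ofCLM (T i)) l (𝓝 (ofCLM T₀)) :=
  tendsto_iff_forall_inner_apply_tendsto.mpr fun x _ => tendsto_const_nhds.inner (h x)

open InnerProductSpace in
theorem exists_le_nhds_of_tendsto_inner_apply {l : Filter (F →WOT[𝕜] F)} [l.NeBot] {r : ℝ}
    (hl : {T | ‖T.toCLM‖ ≤ r} ∈ l) {Φ : F → F → 𝕜}
    (hΦ : ∀ x y, Tendsto (fun T : F →WOT[𝕜] F => ⟪y, T x⟫_𝕜) l (𝓝 (Φ x y))) :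
    ∃ S : F →WOT[𝕜] F, ‖S.toCLM‖ ≤ r ∧ l ≤ 𝓝 S := by
  obtain ⟨T₀, hT₀⟩ := Filter.nonempty_of_mem hl
  have hr : 0 ≤ r := (norm_nonneg _).trans hT₀
  have hΦr (x y : F) : ‖Φ x y‖ ≤ r * ‖x‖ * ‖y‖ :=
    le_of_tendsto (hΦ x y).norm (Filter.mem_of_superset hl fun T hT => norm_inner_apply_le hT x y)
  have add_left (x x' y : F) : Φ (x + x') y = Φ x y + Φ x' y :=
    tendsto_nhds_unique (hΦ (x + x') y) (by simpa [inner_add_right] using (hΦ x y).add (hΦ x' y))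
  have smul_left (c : 𝕜) (x y : F) : Φ (c • x) y = c * Φ x y :=
    tendsto_nhds_unique (hΦ (c • x) y) (by simpa [inner_smul_right] using (hΦ x y).const_mul c)
  have add_right (x y y' : F) : Φ x (y + y') = Φ x y + Φ x y' :=
    tendsto_nhds_unique (hΦ x (y + y')) (by simpa [inner_add_left] using (hΦ x y).add (hΦ x y'))
  have smul_right (c : 𝕜) (x y : F) : Φ x (c • y) = starRingEnd 𝕜 c * Φ x y :=
    tendsto_nhds_unique (hΦ x (c • y)) (by simpa [inner_smul_left] using (hΦ x y).const_mul _)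
  set B : F →L⋆[𝕜] F →L[𝕜] 𝕜 :=
    (LinearMap.mk₂'ₛₗ (starRingEnd 𝕜) (RingHom.id 𝕜) (fun x y => starRingEnd 𝕜 (Φ x y))
      (by simp [add_left]) (by simp [smul_left]) (by simp [add_right])
      (by simp [smul_right])).mkContinuous₂ r (by simpa using hΦr)
  set S := continuousLinearMapOfBilin B
  have hS (x y : F) : ⟪y, S x⟫_𝕜 = Φ x y := by
    rw [← inner_conj_symm, continuousLinearMapOfBilin_apply]
    simp [B]
  refine ⟨ofCLM S, ContinuousLinearMap.opNorm_le_bound _ hr fun x => ?_, ?_⟩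
  · show ‖(toDual 𝕜 F).symm (B x)‖ ≤ r * ‖x‖
    rw [LinearIsometryEquiv.norm_map]
    exact B.le_of_opNorm_le (LinearMap.mkContinuous₂_norm_le _ hr _) x
  · rw [le_nhds_iff_forall_inner_apply_le_nhds]
    intro x y
    simp only [ofCLM_apply, hS]
    exact hΦ x y

theorem isCompact_setOf_norm_toCLM_le (r : ℝ) :
    IsCompact {T : F →WOT[𝕜] F | ‖T.toCLM‖ ≤ r} := by
  refine isCompact_iff_ultrafilter_le_nhds.mpr fun 𝒰 h𝒰 => ?_
  rw [le_principal_iff] at h𝒰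
  have hlim (x y : F) : ∃ z, Tendsto (fun T : F →WOT[𝕜] F => ⟪y, T x⟫_𝕜) 𝒰 (𝓝 z) := by
    obtain ⟨z, -, h⟩ := (isCompact_closedBall (0 : 𝕜) (r * ‖x‖ * ‖y‖)).ultrafilter_le_nhds
      (𝒰.map fun T => ⟪y, T x⟫_𝕜) (by
        rw [Ultrafilter.coe_map, le_principal_iff, Filter.mem_map]
        exact Filter.mem_of_superset h𝒰 fun T hT =>
          mem_closedBall_zero_iff.mpr (norm_inner_apply_le hT x y))
    exact ⟨z, h⟩
  choose Φ hΦ using hlim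
  exact exists_le_nhds_of_tendsto_inner_apply h𝒰 hΦ

theorem isClosed_setOf_toCLM_mem_Icc {H : Type*} [NormedAddCommGroup H] [InnerProductSpace ℂ H]
    [CompleteSpace H] (a b : H →L[ℂ] H) :
    IsClosed {T : H →WOT[ℂ] H | T.toCLM ∈ Set.Icc a b} := by
  have hcont (x : H) : Continuous fun T : H →WOT[ℂ] H => ⟪x, T.toCLM x⟫_ℂ :=
    continuous_inner_apply continuous_id x x
  simp only [Set.mem_Icc, ContinuousLinearMap.le_iff_forall_inner_le, Set.ofPred_and,
    Set.ofPred_forall]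
  exact (isClosed_iInter fun x => isClosed_le continuous_const (hcont x)).inter
    (isClosed_iInter fun x => isClosed_le (hcont x) continuous_const)

end ContinuousLinearMapWOT

theorem VonNeumannAlgebra.isClosed_setOf_toCLM_mem {H : Type*} [NormedAddCommGroup H]
    [InnerProductSpace ℂ H] [CompleteSpace H] (M : VonNeumannAlgebra H) :
    IsClosed {T : H →WOT[ℂ] H | T.toCLM ∈ M} := by
  have := ContinuousLinearMapWOT.isClosed_setOf_toCLM_mem_centralizer
    (M : Set (H →L[ℂ] H)).centralizer
  rwa [M.centralizer_centralizer] at this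

section

variable {H : Type*} [NormedAddCommGroup H] [InnerProductSpace ℂ H] [CompleteSpace H]

def positiveUnitBallWOT (M : VonNeumannAlgebra H) : Set (H →WOT[ℂ] H) :=
  {T | T.toCLM ∈ M ∧ T.toCLM ∈ Set.Icc 0 1}

theorem isCompact_positiveUnitBallWOT (M : VonNeumannAlgebra H) :
    IsCompact (positiveUnitBallWOT M) :=
  (ContinuousLinearMapWOT.isCompact_setOf_norm_toCLM_le 1).of_isClosed_subset
    (M.isClosed_setOf_toCLM_mem.inter (ContinuousLinearMapWOT.isClosed_setOf_toCLM_mem_Icc 0 1))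
    fun _ hT => (CStarAlgebra.mem_Icc_iff_norm_le_one.mp hT.2).2

theorem NormalFunctionalOn.continuousOn_positiveUnitBallWOT {M : VonNeumannAlgebra H}
    {ρ : (H →L[ℂ] H) → ℂ} (hρ : NormalFunctionalOn M ρ) :
    ContinuousOn (fun T : H →WOT[ℂ] H => ρ T.toCLM) (positiveUnitBallWOT M) := by
  obtain ⟨u, v, hu, hv, hρuv⟩ := hρ
  have hseries : ContinuousOn (fun T : H →WOT[ℂ] H => ∑' m, ⟪u m, T (v m)⟫_ℂ)
      (positiveUnitBallWOT M) := by
    refine continuousOn_tsum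
      (fun m => (ContinuousLinearMapWOT.continuous_inner_apply continuous_id _ _).continuousOn)
      (summable_norm_mul_norm_of_summable_sq hu hv) fun m T hT => ?_
    calc ‖⟪u m, T (v m)⟫_ℂ‖ ≤ ‖u m‖ * (‖T.toCLM‖ * ‖v m‖) :=
          (norm_inner_le_norm _ _).trans (by gcongr; exact T.toCLM.le_opNorm _)
      _ ≤ ‖u m‖ * ‖v m‖ := by
          gcongr
          exact mul_le_of_le_one_left (norm_nonneg _)
            (CStarAlgebra.mem_Icc_iff_norm_le_one.mp hT.2).2
  exact hseries.congr fun T hT => hρuv _ hT.1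

theorem tendsto_conjugate_one_sub_apply {Q : ℕ → H →L[ℂ] H} (hQ : ∀ n, Q n ∈ Set.Icc 0 1)
    (hQ0 : ∀ h, Tendsto (fun n => Q n h) atTop (𝓝 0)) (X : H →L[ℂ] H) (h : H) :
    Tendsto (fun n => ((1 - Q n) * X * (1 - Q n)) h) atTop (𝓝 (X h)) := by
  have hnorm (n : ℕ) : ‖1 - Q n‖ ≤ 1 :=
    (CStarAlgebra.mem_Icc_iff_norm_le_one.mp ⟨sub_nonneg.mpr (hQ n).2, sub_le_self _ (hQ n).1⟩).2
  have hsub (h : H) : Tendsto (fun n => (1 - Q n) h) atTop (𝓝 ((1 : H →L[ℂ] H) h)) := by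
    simpa using tendsto_const_nhds.sub (hQ0 h)
  exact ContinuousLinearMap.tendsto_apply_of_tendsto hnorm hsub
    ((X.continuous.tendsto h).comp (by simpa using hsub h))

theorem NormalFunctionalOn.tendstoUniformly_of_tendsto_zero {M : VonNeumannAlgebra H}
    {ρ : ℕ → (H →L[ℂ] H) →ₗ[ℂ] ℂ} (hρ : ∀ j, NormalFunctionalOn M (ρ j))
    (hcauchy : ∀ X ∈ M, CauchySeq fun j => ρ j X) {Q : ℕ → H →L[ℂ] H} (hQM : ∀ n, Q n ∈ M)
    (hQ : ∀ n, Q n ∈ Set.Icc 0 1) (hQ0 : ∀ h, Tendsto (fun n => Q n h) atTop (𝓝 0)) :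
    TendstoUniformly (fun n j => ρ j (Q n)) 0 atTop := by
  let K := positiveUnitBallWOT M
  have : CompactSpace K := isCompact_iff_compactSpace.mp (isCompact_positiveUnitBallWOT M)
  have : Nonempty K := ⟨⟨0, zero_mem M, le_rfl, zero_le_one⟩⟩
  refine BaireSpace.tendstoUniformly_of_eq_sub (f := fun j (T : K) => ρ j T.1.toCLM)
    (fun j => (hρ j).continuousOn_positiveUnitBallWOT.domRestrict) (fun T => hcauchy _ T.2.1)
    fun ⟨X, hXM, hX⟩ => ?_
  have hconjM (n : ℕ) : (1 - Q n) * X.toCLM * (1 - Q n) ∈ M :=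
    mul_mem (mul_mem (sub_mem (one_mem M) (hQM n)) hXM) (sub_mem (one_mem M) (hQM n))
  refine ⟨fun n => ⟨.ofCLM ((1 - Q n) * X.toCLM * (1 - Q n) + Q n), add_mem (hconjM n) (hQM n),
      conjugate_one_sub_add_mem_Icc hX (hQ n)⟩,
    fun n => ⟨.ofCLM ((1 - Q n) * X.toCLM * (1 - Q n)), hconjM n,
      conjugate_one_sub_mem_Icc hX (hQ n)⟩, ?_, ?_, fun n j => ?_⟩
  · refine tendsto_subtype_rng.mpr (ContinuousLinearMapWOT.tendsto_ofCLM_of_tendsto_apply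
      fun h => ?_)
    simpa using (tendsto_conjugate_one_sub_apply hQ hQ0 X.toCLM h).add (hQ0 h)
  · exact tendsto_subtype_rng.mpr (ContinuousLinearMapWOT.tendsto_ofCLM_of_tendsto_apply
      (tendsto_conjugate_one_sub_apply hQ hQ0 X.toCLM))
  · simp [map_add]

theorem normalFunctionalOn_inner_apply (M : Set (H →L[ℂ] H)) (ξ : H) :
    NormalFunctionalOn M fun X => ⟪ξ, X ξ⟫_ℂ :=
  ⟨_, _, summable_norm_pi_single_sq 0 ξ, summable_norm_pi_single_sq 0 ξ, fun X _ => by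
    rw [tsum_eq_single 0 fun n hn => by simp [hn]]; simp⟩

theorem SigmaStrongStarTendsto.tendsto_apply {A : ℕ → H →L[ℂ] H} {L : H →L[ℂ] H}
    (hA : SigmaStrongStarTendsto A L) (h : H) : Tendsto (fun n => A n h) atTop (𝓝 (L h)) := by
  have hsq : Tendsto (fun n => ‖A n h - L h‖ ^ 2) atTop (𝓝 0) := by
    refine squeeze_zero (fun _ => by positivity) (fun n => ?_)
      (hA _ (summable_norm_pi_single_sq 0 h))
    rw [tsum_eq_single 0 fun k hk => by simp [hk]]
    simpa using tsum_nonneg fun k => by positivity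
  rw [tendsto_iff_norm_sub_tendsto_zero]
  simpa using hsq.sqrt

end

namespace CPSemigroup

variable {H : Type*} [NormedAddCommGroup H] [InnerProductSpace ℂ H] [CompleteSpace H]
  {M : VonNeumannAlgebra H} (S : CPSemigroup M)

theorem norm_apply_sq_le {t : ℝ} (ht : 0 ≤ t) {x : H →L[ℂ] H} (hx : x ∈ M) (ξ : H) :
    ‖S.φ t x ξ‖ ^ 2 ≤ (⟪ξ, S.φ t (star x * x) ξ⟫_ℂ).re := by
  set χ := S.φ t x ξ
  -- Complete positivity on the pair `(1, x)` makes `c ↦ ∑ᵢⱼ ⟪vᵢ, φ_t(aᵢ* aⱼ) vⱼ⟫` with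
  -- `v = (c • χ, ξ)` a nonnegative quadratic form in `c`, and `‖φ_t(1)‖ ≤ 1` bounds its leading
  -- coefficient by `‖χ‖²`.
  refine Complex.le_re_of_forall_nonneg_quadratic (p := ⟪χ, S.φ t 1 χ⟫_ℂ)
    (b := ⟪ξ, S.φ t (star x) χ⟫_ℂ) (fun c => ?_) ?_
  · have hpos := S.completelyPositive t ht 2 ![1, x] (Fin.forall_fin_two.mpr ⟨one_mem M, hx⟩)
      ![c • χ, ξ]
    have hχ : ⟪χ, S.φ t x ξ⟫_ℂ = ((‖χ‖ ^ 2 : ℝ) : ℂ) := by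
      push_cast; exact inner_self_eq_norm_sq_to_K χ
    simp only [Fin.sum_univ_two, Matrix.cons_val_zero, Matrix.cons_val_one, star_one, one_mul,
      mul_one, map_smul, inner_smul_left, inner_smul_right, hχ] at hpos
    convert hpos using 1
    ring
  · calc (⟪χ, S.φ t 1 χ⟫_ℂ).re ≤ ‖χ‖ * ‖S.φ t 1 χ‖ :=
          (Complex.re_le_norm _).trans (norm_inner_le_norm _ _)
      _ ≤ ‖χ‖ * ‖χ‖ := by
          gcongr
          exact (S.φ t 1).le_of_opNorm_le ((S.contractive t ht 1 (one_mem M)).trans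
            ContinuousLinearMap.norm_id_le) χ |>.trans_eq (one_mul _)
      _ = ‖χ‖ ^ 2 := (sq _).symm

theorem tendsto_inner_apply {t : ℕ → ℝ} (ht : ∀ k, 0 ≤ t k) {t₀ : ℝ} (ht₀ : 0 ≤ t₀)
    (htt : Tendsto t atTop (𝓝 t₀)) {X : H →L[ℂ] H} (hX : X ∈ M) (ξ η : H) :
    Tendsto (fun k => ⟪η, S.φ (t k) X ξ⟫_ℂ) atTop (𝓝 ⟪η, S.φ t₀ X ξ⟫_ℂ) :=
  (S.pointWeakContinuous X hX ξ η t₀ ht₀).comp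
    (tendsto_nhdsWithin_iff.mpr ⟨htt, .of_forall ht⟩)

theorem tendstoUniformly_apply_of_norm_le_one {t : ℕ → ℝ} (ht : ∀ k, 0 ≤ t k) {t₀ : ℝ}
    (ht₀ : 0 ≤ t₀) (htt : Tendsto t atTop (𝓝 t₀)) {B : ℕ → H →L[ℂ] H} (hBM : ∀ n, B n ∈ M)
    (hB1 : ∀ n, ‖B n‖ ≤ 1) (hB0 : ∀ h, Tendsto (fun n => B n h) atTop (𝓝 0)) (ξ : H) :
    TendstoUniformly (fun n k => S.φ (t k) (B n) ξ) 0 atTop := by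
  let ρ (k : ℕ) : (H →L[ℂ] H) →ₗ[ℂ] ℂ :=
    (innerₛₗ ℂ ξ).comp ((ContinuousLinearMap.apply ℂ H ξ).toLinearMap.comp (S.φ (t k)))
  have hQ0 (h : H) : Tendsto (fun n => (star (B n) * B n) h) atTop (𝓝 0) :=
    squeeze_zero_norm (fun n => (star (B n)).le_of_opNorm_le ((norm_star _).trans_le (hB1 n)) _
      |>.trans_eq (one_mul _)) (by simpa using (hB0 h).norm)
  have hunif := NormalFunctionalOn.tendstoUniformly_of_tendsto_zero (ρ := ρ)
    (fun k => S.normal (t k) (ht k) _ (normalFunctionalOn_inner_apply _ ξ))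
    (fun X hX => (S.tendsto_inner_apply ht ht₀ htt hX ξ ξ).cauchySeq)
    (fun n => mul_mem (star_mem (hBM n)) (hBM n))
    (fun n => CStarAlgebra.mem_Icc_iff_norm_le_one.mpr ⟨star_mul_self_nonneg _,
      by rw [CStarRing.norm_star_mul_self]; nlinarith [hB1 n, norm_nonneg (B n)]⟩) hQ0
  rw [Metric.tendstoUniformly_iff] at hunif ⊢
  intro ε hε
  filter_upwards [hunif (ε ^ 2) (by positivity)] with n hn k
  specialize hn k
  simp only [Pi.zero_apply, dist_zero_left] at hn ⊢
  have hschwarz := S.norm_apply_sq_le (ht k) (hBM n) ξ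
  have hre : (⟪ξ, S.φ (t k) (star (B n) * B n) ξ⟫_ℂ).re ≤ ‖ρ k (star (B n) * B n)‖ :=
    Complex.re_le_norm _
  nlinarith [norm_nonneg (S.φ (t k) (B n) ξ)]

theorem tendstoUniformly_apply_of_norm_le {t : ℕ → ℝ} (ht : ∀ k, 0 ≤ t k) {t₀ : ℝ}
    (ht₀ : 0 ≤ t₀) (htt : Tendsto t atTop (𝓝 t₀)) {B : ℕ → H →L[ℂ] H} (hBM : ∀ n, B n ∈ M)
    {C : ℝ} (hBC : ∀ n, ‖B n‖ ≤ C) (hB0 : ∀ h, Tendsto (fun n => B n h) atTop (𝓝 0)) (ξ : H) :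
    TendstoUniformly (fun n k => S.φ (t k) (B n) ξ) 0 atTop := by
  have hC : 0 < C + 1 := by linarith [(norm_nonneg _).trans (hBC 0)]
  set c : ℂ := ((C + 1 : ℝ) : ℂ)
  have hc : c ≠ 0 := Complex.ofReal_ne_zero.mpr hC.ne'
  have hscaled := S.tendstoUniformly_apply_of_norm_le_one ht ht₀ htt (B := fun n => c⁻¹ • B n)
    (fun n => M.toStarSubalgebra.smul_mem (hBM n) _) (fun n => ?_) (fun h => ?_) ξ
  · simpa [Function.comp_def, smul_smul, hc, Pi.zero_def] using
      (uniformContinuous_const_smul c).comp_tendstoUniformly hscaled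
  · rw [norm_smul, norm_inv, Complex.norm_real, Real.norm_of_nonneg hC.le]
    exact inv_mul_le_one_of_le₀ ((hBC n).trans (by linarith)) hC.le
  · simpa using (hB0 h).const_smul c⁻¹

end CPSemigroup

/-- **Uniformity lemma.** Let `(Aₙ)` be a norm-bounded sequence in `M` converging to `A` in
the σ-strong* topology, `t₀ ≥ 0` and `t_k → t₀`. Then for every `ξ ∈ H` and `ε > 0` there
is `N` such that `‖φ_{t_k}(Aₙ − A)ξ‖ < ε` for all `n ≥ N` and all `k` simultaneously. -/
theorem cpSemigroup_uniformity {H : Type*} [NormedAddCommGroup H]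
    [InnerProductSpace ℂ H] [CompleteSpace H] {M : VonNeumannAlgebra H}
    (S : CPSemigroup M) (A : ℕ → H →L[ℂ] H) (L : H →L[ℂ] H)
    (hmem : ∀ n, A n ∈ M) (hL : L ∈ M)
    (C : ℝ) (hbd : ∀ n, ‖A n‖ ≤ C) (hconv : SigmaStrongStarTendsto A L)
    (t₀ : ℝ) (ht₀ : 0 ≤ t₀) (t : ℕ → ℝ) (ht : ∀ k, 0 ≤ t k)
    (htt : Filter.Tendsto t Filter.atTop (nhds t₀)) (ξ : H) (ε : ℝ) (hε : 0 < ε) :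
    ∃ N : ℕ, ∀ n ≥ N, ∀ k, ‖S.φ (t k) (A n - L) ξ‖ < ε := by
  have hnull (h : H) : Tendsto (fun n => (A n - L) h) atTop (𝓝 0) := by
    simpa using (hconv.tendsto_apply h).sub_const (L h)
  have hunif := S.tendstoUniformly_apply_of_norm_le ht ht₀ htt (fun n => sub_mem (hmem n) hL)
    (fun n => (norm_sub_le _ _).trans (add_le_add_left (hbd n) _)) hnull ξ
  obtain ⟨N, hN⟩ := eventually_atTop.mp (Metric.tendstoUniformly_iff.mp hunif ε hε)
  exact ⟨N, fun n hn k => by simpa only [Pi.zero_apply, dist_zero_left] using hN n hn k⟩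
end
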